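/- Let F/E be a finite separable field extension, E'/E an arbitrary field extension, and F̂/E the Galois closure of F/E. Assume that E' ⊗_E F is a field, and let F̂_{E'} denote the Galois closure of E' ⊗_E F over E'. Then there exists a surjective E'-algebra homomorphism E' ⊗_E F̂ → F̂_{E'} restricting to the identity on E' ⊗_E F. -/

import Mathlib

open scoped TensorProduct
open Algebra.TensorProduct IntermediateField

/-!
Through `E' ⊗_E F ≅ T`, every `E`-embedding `σ : F → Ω` extends to the `E'`-embedding
`e' ⊗ f ↦ e' σ(f)` of `T`, so `F̂ ⊆ F̂_{E'}` and multiplication `E' ⊗_E F̂ → Ω` lands in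
`F̂_{E'}`. Its image is a finite-dimensional `E'`-algebra inside a field, hence a field, and
it contains every `E'`-embedded copy `τ(T) = E' · τ(F)` of `T` because `τ(F) ⊆ F̂`.
So the image is all of `F̂_{E'}`.
-/

section CommRing

variable {E E' F T : Type*} [CommRing E] [CommRing E'] [CommRing F] [CommRing T]
  [Algebra E E'] [Algebra E F] [Algebra E T] [Algebra E' T] [Algebra F T]
  [IsScalarTower E E' T] [IsScalarTower E F T]
  (hbij : Function.Bijective
    (productMap (IsScalarTower.toAlgHom E E' T) (IsScalarTower.toAlgHom E F T)))

include hbij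

noncomputable def algEquivOfBijectiveProductMap : E' ⊗[E] F ≃ₐ[E'] T :=
  AlgEquiv.ofBijective (productLeftAlgHom (Algebra.ofId E' T) (IsScalarTower.toAlgHom E F T)) hbij

@[simp]
theorem algEquivOfBijectiveProductMap_tmul (a : E') (b : F) :
    algEquivOfBijectiveProductMap hbij (a ⊗ₜ b) = algebraMap E' T a * algebraMap F T b :=
  rfl

theorem exists_algHom_restrictScalars_comp_eq_of_bijective_productMap
    {Ω : Type*} [CommRing Ω] [Algebra E Ω] [Algebra E' Ω] [IsScalarTower E E' Ω]
    (σ : F →ₐ[E] Ω) :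
    ∃ τ : T →ₐ[E'] Ω, (τ.restrictScalars E).comp (IsScalarTower.toAlgHom E F T) = σ := by
  refine ⟨(productLeftAlgHom (Algebra.ofId E' Ω) σ).comp
    (algEquivOfBijectiveProductMap hbij).symm.toAlgHom, AlgHom.ext fun f => ?_⟩
  have hf : (algEquivOfBijectiveProductMap hbij).symm (algebraMap F T f) = 1 ⊗ₜ f :=
    (AlgEquiv.symm_apply_eq _).2 (by simp)
  simp [hf]

end CommRing

theorem AlgHom.isAlgebraic_range {K A L : Type*} [Field K] [Ring A] [Field L]
    [Algebra K A] [Algebra K L] [Algebra.IsIntegral K A] (f : A →ₐ[K] L) :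
    f.range.IsAlgebraic := by
  rintro _ ⟨a, rfl⟩
  exact ((Algebra.IsIntegral.isIntegral a).map f).isAlgebraic

section Field

variable {E Ω : Type*} [Field E] [Field Ω] [Algebra E Ω]
  (E' : Type*) [Field E'] [Algebra E E'] [Algebra E' Ω] [IsScalarTower E E' Ω]

noncomputable def IntermediateField.tensorMulHom (K : IntermediateField E Ω) :
    E' ⊗[E] K →ₐ[E'] Ω :=
  productLeftAlgHom (Algebra.ofId E' Ω) K.val

@[simp]
theorem IntermediateField.tensorMulHom_tmul (K : IntermediateField E Ω) (a : E') (x : K) :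
    K.tensorMulHom E' (a ⊗ₜ x) = algebraMap E' Ω a * x :=
  rfl

variable {E'}

theorem IntermediateField.range_tensorMulHom_le {K : IntermediateField E Ω}
    {L : IntermediateField E' Ω} (h : K ≤ L.restrictScalars E) :
    (K.tensorMulHom E').range ≤ L.toSubalgebra := by
  rintro _ ⟨x, rfl⟩
  induction x using TensorProduct.induction_on with
  | zero => simp
  | tmul a y => simpa using mul_mem (L.algebraMap_mem a) (h y.2)
  | add x y hx hy => simpa using add_mem hx hy

variable {F T : Type*} [Field F] [Field T]
  [Algebra E F] [Algebra E T] [Algebra E' T] [Algebra F T]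
  [IsScalarTower E E' T] [IsScalarTower E F T]
  (hbij : Function.Bijective
    (productMap (IsScalarTower.toAlgHom E E' T) (IsScalarTower.toAlgHom E F T)))

include hbij

theorem normalClosure_le_restrictScalars_normalClosure :
    normalClosure E F Ω ≤ (normalClosure E' T Ω).restrictScalars E := by
  refine normalClosure_le_iff.2 fun σ => ?_
  obtain ⟨τ, hτ⟩ := exists_algHom_restrictScalars_comp_eq_of_bijective_productMap hbij σ
  rintro _ ⟨f, rfl⟩
  rw [← hτ]
  exact τ.fieldRange_le_normalClosure ⟨algebraMap F T f, rfl⟩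

theorem range_tensorMulHom_normalClosure [FiniteDimensional E F] :
    ((normalClosure E F Ω).tensorMulHom E').range = (normalClosure E' T Ω).toSubalgebra := by
  refine le_antisymm
    (range_tensorMulHom_le (normalClosure_le_restrictScalars_normalClosure hbij)) ?_
  set ψ := (normalClosure E F Ω).tensorMulHom E'
  have hψ := AlgHom.isAlgebraic_range (A := E' ⊗[E] normalClosure E F Ω) ψ
  suffices normalClosure E' T Ω ≤ hψ.toIntermediateField from this
  refine normalClosure_le_iff.2 fun τ => ?_
  let σ : F →ₐ[E] normalClosure E F Ω :=
    ((τ.restrictScalars E).comp (IsScalarTower.toAlgHom E F T)).codRestrict _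
      fun f => AlgHom.fieldRange_le_normalClosure _ ⟨f, rfl⟩
  have hτ : τ.comp (algEquivOfBijectiveProductMap hbij).toAlgHom =
      ψ.comp (map (AlgHom.id E' E') σ) := by
    ext f
    simp only [AlgHom.comp_apply, AlgHom.restrictScalars_apply, includeRight_apply,
      AlgEquiv.coe_toAlgHom, algEquivOfBijectiveProductMap_tmul, map_tmul, tensorMulHom_tmul,
      map_one, one_mul, ψ]
    rfl
  rintro _ ⟨t, rfl⟩
  obtain ⟨s, rfl⟩ := (algEquivOfBijectiveProductMap hbij).surjective t
  exact ⟨map (AlgHom.id E' E') σ s, congrArg (· s) hτ.symm⟩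

end Field

theorem surjective_base_change_of_galois_closure_general
    {E F E' T Ω : Type*} [Field E] [Field F] [Field E'] [Field T] [Field Ω]
    [Algebra E F] [Algebra E E'] [FiniteDimensional E F]
    [Algebra E T] [Algebra E' T] [Algebra F T]
    [IsScalarTower E E' T] [IsScalarTower E F T]
    (hbij : Function.Bijective
      (Algebra.TensorProduct.productMap (IsScalarTower.toAlgHom E E' T)
        (IsScalarTower.toAlgHom E F T)))
    [Algebra E Ω] [Algebra E' Ω] [Algebra F Ω]
    [IsScalarTower E E' Ω]
    (hF : ∀ f : F, algebraMap F Ω f ∈ IntermediateField.normalClosure E F Ω) :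
    ∃ φ : (E' ⊗[E] ↥(IntermediateField.normalClosure E F Ω)) →ₐ[E'] ↥(IntermediateField.normalClosure E' T Ω),
      Function.Surjective φ ∧
        ∀ (e' : E') (f : F),
          ((φ (e' ⊗ₜ[E] ⟨algebraMap F Ω f, hF f⟩) : ↥(IntermediateField.normalClosure E' T Ω)) : Ω)
            = algebraMap E' Ω e' * algebraMap F Ω f := by
  have hrange := range_tensorMulHom_normalClosure (Ω := Ω) hbij
  refine ⟨((normalClosure E F Ω).tensorMulHom E').codRestrict (normalClosure E' T Ω).toSubalgebra
    fun x => hrange ▸ AlgHom.mem_range_self _ x, fun y => ?_, fun e' f => rfl⟩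
  obtain ⟨x, hx⟩ := hrange.ge y.2
  exact ⟨x, Subtype.ext hx⟩

/-- Let `F/E` be finite separable, `E'/E` an arbitrary field extension, and suppose
`E' ⊗_E F` is a field (formalized: `T` is a field and the canonical map
`E' ⊗_E F → T` is bijective). Inside an algebraically closed field `Ω ⊇ T`, let
`F̂ = normalClosure E F Ω` be the Galois closure of `F/E` and
`F̂_{E'} = normalClosure E' T Ω` the Galois closure of `T = E' ⊗_E F` over `E'`.
Then there is a surjective `E'`-algebra homomorphism `E' ⊗_E F̂ → F̂_{E'}`
restricting to the identity on `E' ⊗_E F`. -/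
theorem surjective_base_change_of_galois_closure
    {E F E' T Ω : Type*} [Field E] [Field F] [Field E'] [Field T] [Field Ω]
    [Algebra E F] [Algebra E E'] [FiniteDimensional E F] [Algebra.IsSeparable E F]
    [Algebra E T] [Algebra E' T] [Algebra F T]
    [IsScalarTower E E' T] [IsScalarTower E F T]
    (hbij : Function.Bijective
      (Algebra.TensorProduct.productMap (IsScalarTower.toAlgHom E E' T)
        (IsScalarTower.toAlgHom E F T)))
    [Algebra T Ω] [Algebra E Ω] [Algebra E' Ω] [Algebra F Ω]
    [IsScalarTower E F Ω] [IsScalarTower E E' Ω] [IsScalarTower E' T Ω]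
    [IsScalarTower F T Ω] [IsAlgClosed Ω]
    (hF : ∀ f : F, algebraMap F Ω f ∈ IntermediateField.normalClosure E F Ω) :
    ∃ φ : (E' ⊗[E] ↥(IntermediateField.normalClosure E F Ω)) →ₐ[E'] ↥(IntermediateField.normalClosure E' T Ω),
      Function.Surjective φ ∧
        ∀ (e' : E') (f : F),
          ((φ (e' ⊗ₜ[E] ⟨algebraMap F Ω f, hF f⟩) : ↥(IntermediateField.normalClosure E' T Ω)) : Ω)
            = algebraMap E' Ω e' * algebraMap F Ω f :=
  surjective_base_change_of_galois_closure_general hbij hF
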